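/- Let k ≥ 2 be an integer and r₀ > 0 with p(r₀) = 0. Then p is differentiable at r₀ and p′(r₀) = ( k(k+2) r₀^{−(3k+1)/(k+1)} Q₁(r₀) / ( (k+1)(r₀² + 1) ) ) · A₀(r₀), where Q₁(r) = −(k+1)²r⁴ + 2(k+1)(2k+1)r³ − 2(k+1)(3k+1)r² + 2(2k−1)(k+1)r − (k−1)². -/

import Mathlib

open Real MeasureTheory Set intervalIntegral Filter

noncomputable def Wfn (k : ℕ) (r t : ℝ) : ℝ :=
  (t * (t + r ^ 2) / (1 - t)) ^ ((1 : ℝ) / ((k : ℝ) + 1))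

noncomputable def a₀ (k : ℕ) (r : ℝ) : ℝ :=
  -((k : ℝ) + 1) * ((k : ℝ) + 2) * r ^ 2 + 2 * (k : ℝ) * ((k : ℝ) + 2) * r - (k : ℝ) * ((k : ℝ) - 1)

noncomputable def a₁ (k : ℕ) : ℝ := 2 * (2 * (k : ℝ) + 1)

noncomputable def periodP (k : ℕ) (r : ℝ) : ℝ :=
  |r| ^ (-(2 * (k : ℝ)) / ((k : ℝ) + 1)) *
    ∫ t in (0 : ℝ)..1, (a₀ k r - a₁ k * t) / Wfn k r t

noncomputable def A0fn (k : ℕ) (r : ℝ) : ℝ := ∫ t in (0 : ℝ)..1, 1 / Wfn k r t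

noncomputable def A1fn (k : ℕ) (r : ℝ) : ℝ := ∫ t in (0 : ℝ)..1, t / Wfn k r t

noncomputable def Q₁ (k : ℕ) (r : ℝ) : ℝ :=
  -((k : ℝ) + 1) ^ 2 * r ^ 4 + 2 * ((k : ℝ) + 1) * (2 * (k : ℝ) + 1) * r ^ 3 -
    2 * ((k : ℝ) + 1) * (3 * (k : ℝ) + 1) * r ^ 2 + 2 * (2 * (k : ℝ) - 1) * ((k : ℝ) + 1) * r -
    ((k : ℝ) - 1) ^ 2

noncomputable def Q₂ (k : ℕ) (r : ℝ) : ℝ :=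
  -((k : ℝ) + 1) ^ 2 * r ^ 4 + 2 * ((k : ℝ) + 1) * (3 * (k : ℝ) + 1) * r ^ 2 -
    4 * ((k : ℝ) + 1) * (2 * (k : ℝ) - 1) * r + 3 * ((k : ℝ) - 1) ^ 2

open Metric

set_option maxHeartbeats 1000000

namespace PP
noncomputable def al (k : ℕ) : ℝ := (1 : ℝ) / ((k : ℝ) + 1)

lemma al_pos (k : ℕ) : 0 < al k := by
  have : (0:ℝ) < (k:ℝ) + 1 := by positivity
  exact div_pos one_pos this

lemma al_le_one (k : ℕ) : al k ≤ 1 := by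
  rw [al, div_le_one (by positivity)]
  linarith [Nat.cast_nonneg (α := ℝ) k]

lemma al_lt_one (k : ℕ) (hk : 2 ≤ k) : al k < 1 := by
  have : (2:ℝ) ≤ (k:ℝ) := by exact_mod_cast hk
  rw [al, div_lt_one (by positivity)]
  linarith

lemma u_pos {r t : ℝ} (hr : r ≠ 0) (ht : t ∈ Ioo (0:ℝ) 1) :
    0 < t * (t + r ^ 2) / (1 - t) := by
  obtain ⟨h0, h1⟩ := ht
  have : 0 < r ^ 2 := by positivity
  apply div_pos (by nlinarith) (by linarith)

lemma Wfn_pos {k : ℕ} {r t : ℝ} (hr : r ≠ 0) (ht : t ∈ Ioo (0:ℝ) 1) :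
    0 < Wfn k r t := rpow_pos_of_pos (u_pos hr ht) _

lemma Winv_eq {k : ℕ} {r t : ℝ} (hr : r ≠ 0) (ht : t ∈ Ioo (0:ℝ) 1) :
    (Wfn k r t)⁻¹ = t ^ (-al k) * (t + r ^ 2) ^ (-al k) * (1 - t) ^ (al k) := by
  obtain ⟨h0, h1⟩ := ht
  have hr2 : (0:ℝ) < r ^ 2 := by positivity
  have htr : (0:ℝ) < t + r ^ 2 := by linarith
  have h1t : (0:ℝ) < 1 - t := by linarith
  rw [Wfn, ← rpow_neg (by positivity), ← al]
  rw [div_rpow (by positivity) h1t.le, mul_rpow h0.le htr.le]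
  rw [div_eq_mul_inv, ← rpow_neg h1t.le, neg_neg]

lemma Winv_le {k : ℕ} {b x t : ℝ} (hb : 0 < b) (hx : b ≤ x) (ht : t ∈ Ioo (0:ℝ) 1) :
    (Wfn k x t)⁻¹ ≤ b ^ (-(2 * al k)) * t ^ (-al k) := by
  obtain ⟨h0, h1⟩ := ht
  have hx0 : 0 < x := lt_of_lt_of_le hb hx
  rw [Winv_eq (ne_of_gt hx0) ⟨h0, h1⟩]
  have h2 : (t + x ^ 2) ^ (-al k) ≤ b ^ (-(2 * al k)) := by
    have : b ^ (-(2 * al k)) = (b ^ 2) ^ (-al k) := by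
      rw [← rpow_natCast b 2, ← rpow_mul hb.le]
      ring_nf
    rw [this]
    apply rpow_le_rpow_of_nonpos (by positivity) (by nlinarith) (by
      simpa using (al_pos k).le)
  have h3 : (1 - t) ^ (al k) ≤ 1 := rpow_le_one (by linarith) (by linarith) (al_pos k).le
  calc t ^ (-al k) * (t + x ^ 2) ^ (-al k) * (1 - t) ^ (al k)
      ≤ t ^ (-al k) * (t + x ^ 2) ^ (-al k) * 1 := by
        apply mul_le_mul_of_nonneg_left h3 (by positivity)
    _ = (t + x ^ 2) ^ (-al k) * t ^ (-al k) := by ring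
    _ ≤ b ^ (-(2 * al k)) * t ^ (-al k) := by
        apply mul_le_mul_of_nonneg_right h2 (by positivity)

lemma intInt {f : ℝ → ℝ} {C e : ℝ} (he : -1 < e)
    (hc : ContinuousOn f (Ioo 0 1))
    (hb : ∀ t ∈ Ioo (0:ℝ) 1, |f t| ≤ C * t ^ e) :
    IntervalIntegrable f volume 0 1 := by
  rw [intervalIntegrable_iff_integrableOn_Ioo_of_le (by norm_num)]
  have hg : IntegrableOn (fun t => C * t ^ e) (Ioo 0 1) volume := by
    have := intervalIntegrable_rpow' (a := 0) (b := 1) he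
    rw [intervalIntegrable_iff_integrableOn_Ioo_of_le (by norm_num)] at this
    exact this.const_mul C
  refine Integrable.mono hg (hc.aestronglyMeasurable measurableSet_Ioo) ?_
  rw [ae_restrict_iff' measurableSet_Ioo]
  filter_upwards with t ht
  have := hb t ht
  rw [Real.norm_eq_abs, Real.norm_eq_abs]
  exact this.trans (le_abs_self _)

lemma contWinv {k : ℕ} {r : ℝ} (hr : r ≠ 0) :
    ContinuousOn (fun t => (Wfn k r t)⁻¹) (Ioo 0 1) := by
  apply ContinuousOn.inv₀
  · apply ContinuousOn.rpow_const
    · apply ContinuousOn.div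
      · fun_prop
      · fun_prop
      · intro t ht; exact ne_of_gt (by linarith [ht.2] : (0:ℝ) < 1 - t)
    · intro t ht; exact Or.inl (ne_of_gt (u_pos hr ht))
  · intro t ht; exact ne_of_gt (Wfn_pos hr ht)

lemma neg_al_gt (k : ℕ) (hk : 2 ≤ k) : (-1 : ℝ) < -al k := by
  linarith [al_lt_one k hk]

lemma intWinv {k : ℕ} (hk : 2 ≤ k) {r : ℝ} (hr : 0 < r) :
    IntervalIntegrable (fun t => (Wfn k r t)⁻¹) volume 0 1 :=
  intInt (neg_al_gt k hk) (contWinv (ne_of_gt hr)) (fun t ht => by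
    rw [abs_of_pos (inv_pos.mpr (Wfn_pos (ne_of_gt hr) ht))]
    exact Winv_le hr le_rfl ht)

lemma intTWinv {k : ℕ} (hk : 2 ≤ k) {r : ℝ} (hr : 0 < r) :
    IntervalIntegrable (fun t => t * (Wfn k r t)⁻¹) volume 0 1 := by
  apply intInt (f := fun t => t * (Wfn k r t)⁻¹) (C := r ^ (-(2 * al k))) (neg_al_gt k hk)
    (ContinuousOn.mul (by fun_prop) (contWinv (ne_of_gt hr)))
  intro t ht
  have h1 : 0 < (Wfn k r t)⁻¹ := inv_pos.mpr (Wfn_pos (ne_of_gt hr) ht)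
  rw [abs_of_pos (by nlinarith [ht.1])]
  calc t * (Wfn k r t)⁻¹ ≤ 1 * (Wfn k r t)⁻¹ := by nlinarith [ht.1, ht.2]
    _ = (Wfn k r t)⁻¹ := one_mul _
    _ ≤ _ := Winv_le hr le_rfl ht

lemma intJWinv {k : ℕ} (hk : 2 ≤ k) {r : ℝ} (hr : 0 < r) :
    IntervalIntegrable (fun t => (Wfn k r t)⁻¹ / (t + r ^ 2)) volume 0 1 := by
  apply intInt (C := r ^ (-2 : ℝ) * r ^ (-(2 * al k))) (neg_al_gt k hk)
  · apply ContinuousOn.div (contWinv (ne_of_gt hr)) (by fun_prop)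
    intro t ht
    have : (0:ℝ) < r ^ 2 := by positivity
    exact ne_of_gt (by linarith [ht.1])
  · intro t ht
    have hr2 : (0:ℝ) < r ^ 2 := by positivity
    have htr : (0:ℝ) < t + r ^ 2 := by linarith [ht.1]
    have h1 : 0 < (Wfn k r t)⁻¹ := inv_pos.mpr (Wfn_pos (ne_of_gt hr) ht)
    rw [abs_of_pos (by positivity), div_le_iff₀ htr]
    have hb := Winv_le (k := k) hr le_rfl ht
    have e1 : r ^ (-2 : ℝ) = (r ^ 2)⁻¹ := by
      rw [show (-2:ℝ) = -((2:ℕ):ℝ) by norm_num, rpow_neg hr.le, rpow_natCast]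
    have h2 : (1:ℝ) ≤ r ^ (-2 : ℝ) * (t + r ^ 2) := by
      rw [e1, inv_mul_eq_div, le_div_iff₀ hr2]
      linarith [ht.1]
    calc (Wfn k r t)⁻¹ ≤ r ^ (-(2 * al k)) * t ^ (-al k) := hb
      _ = r ^ (-(2 * al k)) * t ^ (-al k) * 1 := (mul_one _).symm
      _ ≤ r ^ (-(2 * al k)) * t ^ (-al k) * (r ^ (-2 : ℝ) * (t + r ^ 2)) := by
          have hnn : 0 ≤ r ^ (-(2 * al k)) * t ^ (-al k) :=
            mul_nonneg (rpow_nonneg hr.le _) (rpow_nonneg ht.1.le _)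
          nlinarith [h2, hnn]
      _ = r ^ (-2 : ℝ) * r ^ (-(2 * al k)) * t ^ (-al k) * (t + r ^ 2) := by ring

lemma phi_deriv {k : ℕ} {r t : ℝ} (hr : 0 < r) (ht : t ∈ Ioo (0:ℝ) 1) :
    HasDerivAt (fun s => (s ^ 2 - s) * (Wfn k r s)⁻¹)
      ((2 - al k) * (t * (Wfn k r t)⁻¹)
        + (2 * al k - 1 + al k * r ^ 2) * (Wfn k r t)⁻¹
        - al k * r ^ 2 * (r ^ 2 + 1) * ((Wfn k r t)⁻¹ / (t + r ^ 2))) t := by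
  obtain ⟨h0, h1⟩ := ht
  have hr2 : (0:ℝ) < r ^ 2 := by positivity
  have htr : (0:ℝ) < t + r ^ 2 := by linarith
  have h1t : (0:ℝ) < 1 - t := by linarith
  set v : ℝ → ℝ := fun s => s * (s + r ^ 2) / (1 - s) with hv_def
  have hv0 : 0 < v t := u_pos (ne_of_gt hr) ⟨h0, h1⟩
  have hv : HasDerivAt v
      (((2 * t + r ^ 2) * (1 - t) + t * (t + r ^ 2)) / (1 - t) ^ 2) t := by
    have hn : HasDerivAt (fun s : ℝ => s * (s + r ^ 2)) (2 * t + r ^ 2) t := by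
      have := (hasDerivAt_id t).fun_mul ((hasDerivAt_id t).add_const (r ^ 2))
      refine this.congr_deriv ?_; simp [id]; ring
    have hd : HasDerivAt (fun s : ℝ => 1 - s) (-1) t := by
      simpa using (hasDerivAt_id t).const_sub 1
    have := hn.fun_div hd (ne_of_gt h1t)
    refine this.congr_deriv ?_; field_simp; ring
  have hvp : HasDerivAt (fun s => (v s) ^ (-al k))
      (-al k * v t ^ (-al k - 1) *
        (((2 * t + r ^ 2) * (1 - t) + t * (t + r ^ 2)) / (1 - t) ^ 2)) t := by
    have := hv.rpow_const (p := -al k) (Or.inl (ne_of_gt hv0))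
    convert this using 1; ring
  have hmul : HasDerivAt (fun s => (s ^ 2 - s) * (v s) ^ (-al k))
      ((2 * t - 1) * (v t) ^ (-al k) + (t ^ 2 - t) *
        (-al k * v t ^ (-al k - 1) *
          (((2 * t + r ^ 2) * (1 - t) + t * (t + r ^ 2)) / (1 - t) ^ 2))) t := by
    have hq : HasDerivAt (fun s : ℝ => s ^ 2 - s) (2 * t - 1) t := by
      have := ((hasDerivAt_pow 2 t).sub (hasDerivAt_id t))
      refine this.congr_deriv ?_; ring
    simpa using hq.fun_mul hvp
  have heq : (fun s => (s ^ 2 - s) * (Wfn k r s)⁻¹)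
      =ᶠ[nhds t] (fun s => (s ^ 2 - s) * (v s) ^ (-al k)) := by
    filter_upwards [Ioo_mem_nhds h0 h1] with s hs
    have hvs : (0:ℝ) < v s := u_pos (ne_of_gt hr) hs
    rw [show Wfn k r s = (v s) ^ (al k) from rfl, ← rpow_neg hvs.le]
  rw [show Wfn k r t = (v t) ^ (al k) from rfl, ← rpow_neg hv0.le]
  refine HasDerivAt.congr_of_eventuallyEq ?_ heq
  refine hmul.congr_deriv ?_
  have hB : v t ^ (-al k - 1) = v t ^ (-al k) / v t := by
    rw [show -al k - 1 = -al k - (1:ℝ) from rfl, rpow_sub hv0, rpow_one]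
  rw [hB]
  have hvt : v t = t * (t + r ^ 2) / (1 - t) := rfl
  rw [hvt]
  field_simp
  ring

lemma phi_cont {k : ℕ} (hk : 2 ≤ k) {r : ℝ} (hr : 0 < r) :
    ContinuousOn (fun s => (s ^ 2 - s) * (Wfn k r s)⁻¹) (Icc 0 1) := by
  have hr2 : (0:ℝ) < r ^ 2 := by positivity
  set Fc : ℝ → ℝ := fun s =>
    -(s ^ (1 - al k) * (1 - s) ^ (1 + al k) * (s + r ^ 2) ^ (-al k)) with hFc
  have hcont : ContinuousOn Fc (Icc 0 1) := by
    apply ContinuousOn.neg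
    apply ContinuousOn.mul
    apply ContinuousOn.mul
    · exact ContinuousOn.rpow_const (by fun_prop)
        (fun s _ => Or.inr (by linarith [al_lt_one k hk]))
    · exact ContinuousOn.rpow_const (by fun_prop)
        (fun s _ => Or.inr (by linarith [al_pos k]))
    · exact ContinuousOn.rpow_const (by fun_prop)
        (fun s hs => Or.inl (by nlinarith [hs.1]))
  apply hcont.congr
  intro s hs
  show (s ^ 2 - s) * (Wfn k r s)⁻¹ = Fc s
  rcases eq_or_lt_of_le hs.1 with h0 | h0
  · rw [← h0]
    simp [Fc, Real.zero_rpow (by linarith [al_lt_one k hk] : (1:ℝ) - al k ≠ 0)]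
  rcases eq_or_lt_of_le hs.2 with h1 | h1
  · rw [h1]
    simp [Fc, Real.zero_rpow (by linarith [al_pos k] : (1:ℝ) + al k ≠ 0)]
  · -- interior
    have hsIoo : s ∈ Ioo (0:ℝ) 1 := ⟨h0, h1⟩
    rw [Winv_eq (ne_of_gt hr) hsIoo]
    have h1s : (0:ℝ) < 1 - s := by linarith
    have e1 : s ^ (1 - al k) = s * s ^ (-al k) := by
      rw [show (1:ℝ) - al k = 1 + -al k by ring, rpow_add h0, rpow_one]
    have e2 : (1 - s) ^ (1 + al k) = (1 - s) * (1 - s) ^ (al k) := by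
      rw [rpow_add h1s, rpow_one]
    rw [hFc]
    simp only [e1, e2]
    ring

lemma key_identity {k : ℕ} (hk : 2 ≤ k) {r : ℝ} (hr : 0 < r) :
    (2 - al k) * (∫ t in (0:ℝ)..1, t * (Wfn k r t)⁻¹)
      + (2 * al k - 1 + al k * r ^ 2) * (∫ t in (0:ℝ)..1, (Wfn k r t)⁻¹)
      - al k * r ^ 2 * (r ^ 2 + 1) * (∫ t in (0:ℝ)..1, (Wfn k r t)⁻¹ / (t + r ^ 2))
      = 0 := by
  have h1 := intTWinv hk hr
  have h2 := intWinv hk hr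
  have h3 := intJWinv hk hr
  have hint : IntervalIntegrable (fun t =>
      (2 - al k) * (t * (Wfn k r t)⁻¹)
        + (2 * al k - 1 + al k * r ^ 2) * (Wfn k r t)⁻¹
        - al k * r ^ 2 * (r ^ 2 + 1) * ((Wfn k r t)⁻¹ / (t + r ^ 2))) volume 0 1 :=
    ((h1.const_mul _).add (h2.const_mul _)).sub (h3.const_mul _)
  have hFTC := integral_eq_sub_of_hasDerivAt_of_le (f := fun s => (s ^ 2 - s) * (Wfn k r s)⁻¹)
    (by norm_num : (0:ℝ) ≤ 1) (phi_cont hk hr) (fun t ht => phi_deriv hr ht) hint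
  have hsplit : ∫ t in (0:ℝ)..1,
      ((2 - al k) * (t * (Wfn k r t)⁻¹)
        + (2 * al k - 1 + al k * r ^ 2) * (Wfn k r t)⁻¹
        - al k * r ^ 2 * (r ^ 2 + 1) * ((Wfn k r t)⁻¹ / (t + r ^ 2)))
      = (2 - al k) * (∫ t in (0:ℝ)..1, t * (Wfn k r t)⁻¹)
        + (2 * al k - 1 + al k * r ^ 2) * (∫ t in (0:ℝ)..1, (Wfn k r t)⁻¹)
        - al k * r ^ 2 * (r ^ 2 + 1) * (∫ t in (0:ℝ)..1, (Wfn k r t)⁻¹ / (t + r ^ 2)) := by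
    rw [integral_sub ((h1.const_mul _).add (h2.const_mul _)) (h3.const_mul _),
      integral_add (h1.const_mul _) (h2.const_mul _),
      intervalIntegral.integral_const_mul, intervalIntegral.integral_const_mul, intervalIntegral.integral_const_mul]
  rw [hsplit] at hFTC
  rw [hFTC]
  norm_num

noncomputable def da₀ (k : ℕ) (x : ℝ) : ℝ :=
  -2 * ((k : ℝ) + 1) * ((k : ℝ) + 2) * x + 2 * (k : ℝ) * ((k : ℝ) + 2)

noncomputable def Ffn (k : ℕ) (x t : ℝ) : ℝ := (a₀ k x - a₁ k * t) * (Wfn k x t)⁻¹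

noncomputable def Ffn' (k : ℕ) (x t : ℝ) : ℝ :=
  (da₀ k x + 2 * al k * x * a₁ k) * (Wfn k x t)⁻¹
    - 2 * al k * x * (a₀ k x + a₁ k * x ^ 2) * ((Wfn k x t)⁻¹ / (t + x ^ 2))

lemma hasDerivAt_a₀ (k : ℕ) (x : ℝ) : HasDerivAt (a₀ k) (da₀ k x) x := by
  have : HasDerivAt (fun x : ℝ =>
      -((k : ℝ) + 1) * ((k : ℝ) + 2) * x ^ 2 + 2 * (k : ℝ) * ((k : ℝ) + 2) * x
        - (k : ℝ) * ((k : ℝ) - 1))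
      (-((k : ℝ) + 1) * ((k : ℝ) + 2) * (2 * x) + 2 * (k : ℝ) * ((k : ℝ) + 2) * 1 - 0) x := by
    apply HasDerivAt.sub
    apply HasDerivAt.add
    · have := (hasDerivAt_pow 2 x).const_mul (-((k : ℝ) + 1) * ((k : ℝ) + 2))
      refine this.congr_deriv ?_ <;> push_cast <;> ring
    · simpa using (hasDerivAt_id x).const_mul (2 * (k : ℝ) * ((k : ℝ) + 2))
    · exact hasDerivAt_const x _
  refine this.congr_deriv ?_
  rw [da₀]; ring

lemma Ffn_deriv {k : ℕ} {x t : ℝ} (hx : 0 < x) (ht : t ∈ Ioo (0:ℝ) 1) :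
    HasDerivAt (fun x => Ffn k x t) (Ffn' k x t) x := by
  obtain ⟨h0, h1⟩ := ht
  have h1t : (0:ℝ) < 1 - t := by linarith
  set v : ℝ → ℝ := fun x => t * (t + x ^ 2) / (1 - t) with hv_def
  have hvpos : ∀ y : ℝ, 0 < v y := fun y => by
    have : (0:ℝ) ≤ y ^ 2 := sq_nonneg y
    apply div_pos (by nlinarith) h1t
  have hv : HasDerivAt v (t * (2 * x) / (1 - t)) x := by
    have h2 : HasDerivAt (fun y : ℝ => t * (t + y ^ 2)) (t * (2 * x)) x := by
      have := ((hasDerivAt_pow 2 x).const_add t).const_mul t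
      refine this.congr_deriv ?_ <;> push_cast <;> ring
    exact h2.div_const (1 - t)
  have hvp : HasDerivAt (fun y => (v y) ^ (-al k))
      (-al k * v x ^ (-al k - 1) * (t * (2 * x) / (1 - t))) x := by
    have := hv.rpow_const (p := -al k) (Or.inl (ne_of_gt (hvpos x)))
    convert this using 1; ring
  have ha : HasDerivAt (fun y => a₀ k y - a₁ k * t) (da₀ k x) x :=
    (hasDerivAt_a₀ k x).sub_const _
  have hmul := ha.fun_mul hvp
  have heq : (fun y => Ffn k y t) = (fun y => (a₀ k y - a₁ k * t) * (v y) ^ (-al k)) := by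
    funext y
    rw [Ffn, show Wfn k y t = (v y) ^ (al k) from rfl, ← rpow_neg (hvpos y).le]
  rw [heq]
  unfold Ffn'
  rw [show Wfn k x t = (v x) ^ (al k) from rfl, ← rpow_neg (hvpos x).le]
  refine hmul.congr_deriv ?_
  have hB : v x ^ (-al k - 1) = v x ^ (-al k) / v x := by
    rw [show -al k - 1 = -al k - (1:ℝ) from rfl, rpow_sub (hvpos x), rpow_one]
  rw [hB]
  have hvx : v x = t * (t + x ^ 2) / (1 - t) := rfl
  have htx : (0:ℝ) < t + x ^ 2 := by nlinarith
  rw [hvx, a₀, a₁, da₀]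
  field_simp
  ring

lemma main_deriv {k : ℕ} (hk : 2 ≤ k) {r₀ : ℝ} (hr : 0 < r₀) :
    HasDerivAt (fun x => ∫ t in (0:ℝ)..1, Ffn k x t)
      (∫ t in (0:ℝ)..1, Ffn' k r₀ t) r₀ := by
  have hε : 0 < r₀ / 2 := by linarith
  -- the compactness bound
  set P : ℝ → ℝ := fun x => |da₀ k x + 2 * al k * x * a₁ k|
    + |2 * al k * x * (a₀ k x + a₁ k * x ^ 2)| * (4 / r₀ ^ 2) with hP_def
  have hPcont : Continuous P := by
    apply Continuous.add
    · apply Continuous.abs; unfold da₀ a₁; fun_prop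
    · apply Continuous.mul _ continuous_const
      apply Continuous.abs; unfold a₀ a₁; fun_prop
  obtain ⟨M, hM⟩ := (isCompact_Icc (a := r₀ / 2) (b := 3 * r₀ / 2)).exists_bound_of_continuousOn
    hPcont.continuousOn
  set bound : ℝ → ℝ := fun t => M * ((r₀ / 2) ^ (-(2 * al k)) * t ^ (-al k)) with hbound_def
  have hball : ∀ x ∈ ball r₀ (r₀ / 2), r₀ / 2 ≤ x ∧ x ≤ 3 * r₀ / 2 ∧ 0 < x := by
    intro x hx
    rw [mem_ball, Real.dist_eq, abs_lt] at hx
    constructor; linarith [hx.1]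
    constructor; linarith [hx.2]
    linarith [hx.1]
  have hae : ∀ᵐ (t : ℝ) ∂volume, t ∈ Set.uIoc (0:ℝ) 1 → t ∈ Ioo (0:ℝ) 1 := by
    have h1 : {(1:ℝ)}ᶜ ∈ ae volume := compl_mem_ae_iff.mpr (measure_singleton 1)
    filter_upwards [h1] with t ht1 htI
    rw [uIoc_of_le (by norm_num : (0:ℝ) ≤ 1)] at htI
    exact ⟨htI.1, lt_of_le_of_ne htI.2 ht1⟩
  have key := hasDerivAt_integral_of_dominated_loc_of_deriv_le (F := fun x t => Ffn k x t)
    (F' := fun x t => Ffn' k x t) (x₀ := r₀) (a := 0) (b := 1) (μ := volume)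
    (bound := bound) (ball_mem_nhds r₀ hε) ?_ ?_ ?_ ?_ ?_ ?_
  · exact key.2
  · -- hF_meas
    filter_upwards [eventually_gt_nhds hr] with x hx
    rw [uIoc_of_le (by norm_num : (0:ℝ) ≤ 1),
      ← Measure.restrict_congr_set (Ioo_ae_eq_Ioc (a := (0:ℝ)) (b := 1))]
    apply ContinuousOn.aestronglyMeasurable _ measurableSet_Ioo
    apply ContinuousOn.mul _ (contWinv (ne_of_gt hx))
    fun_prop
  · -- hF_int
    have h2 := intWinv hk hr
    have h1 := intTWinv hk hr
    have : IntervalIntegrable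
        (fun t => a₀ k r₀ * (Wfn k r₀ t)⁻¹ - a₁ k * (t * (Wfn k r₀ t)⁻¹)) volume 0 1 :=
      (h2.const_mul _).sub (h1.const_mul _)
    apply this.congr
    intro t _; beta_reduce
    rw [Ffn]; ring
  · -- hF'_meas
    rw [uIoc_of_le (by norm_num : (0:ℝ) ≤ 1),
      ← Measure.restrict_congr_set (Ioo_ae_eq_Ioc (a := (0:ℝ)) (b := 1))]
    apply ContinuousOn.aestronglyMeasurable _ measurableSet_Ioo
    unfold Ffn'
    apply ContinuousOn.sub
    · exact ContinuousOn.mul (by fun_prop) (contWinv (ne_of_gt hr))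
    · apply ContinuousOn.mul (by fun_prop)
      apply ContinuousOn.div (contWinv (ne_of_gt hr)) (by fun_prop)
      intro t ht
      have : (0:ℝ) < r₀ ^ 2 := by positivity
      exact ne_of_gt (by linarith [ht.1])
  · -- h_bound
    filter_upwards [hae] with t htI htIoc x hx
    have ht := htI htIoc
    obtain ⟨hx1, hx2, hx0⟩ := hball x hx
    have hg : 0 < (Wfn k x t)⁻¹ := inv_pos.mpr (Wfn_pos (ne_of_gt hx0) ht)
    have hgle : (Wfn k x t)⁻¹ ≤ (r₀ / 2) ^ (-(2 * al k)) * t ^ (-al k) :=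
      Winv_le hε hx1 ht
    have htx : (0:ℝ) < t + x ^ 2 := by nlinarith [ht.1]
    have htx2 : (4 : ℝ) / r₀ ^ 2 ≥ (t + x ^ 2)⁻¹ := by
      rw [ge_iff_le, inv_le_iff_one_le_mul₀ htx, ← div_le_iff₀' (by positivity : (0:ℝ) < 4 / r₀ ^ 2)]
      have : r₀ ^ 2 / 4 ≤ x ^ 2 := by nlinarith
      calc 1 / (4 / r₀ ^ 2) = r₀ ^ 2 / 4 := by field_simp
        _ ≤ x ^ 2 := this
        _ ≤ t + x ^ 2 := by linarith [ht.1]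
    have hPle : P x ≤ M := le_trans (le_abs_self _) (hM x ⟨hx1, hx2⟩)
    have hP0 : 0 ≤ P x := by positivity
    rw [Real.norm_eq_abs, Ffn']
    have habs : |(da₀ k x + 2 * al k * x * a₁ k) * (Wfn k x t)⁻¹
        - 2 * al k * x * (a₀ k x + a₁ k * x ^ 2) * ((Wfn k x t)⁻¹ / (t + x ^ 2))|
        ≤ P x * (Wfn k x t)⁻¹ := by
      apply (abs_sub _ _).trans
      rw [abs_mul, abs_mul, hP_def]
      have e1 : |(Wfn k x t)⁻¹| = (Wfn k x t)⁻¹ := abs_of_pos hg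
      have e2 : |(Wfn k x t)⁻¹ / (t + x ^ 2)| = (Wfn k x t)⁻¹ * (t + x ^ 2)⁻¹ := by
        rw [div_eq_mul_inv, abs_mul, e1, abs_of_pos (inv_pos.mpr htx)]
      rw [e1, e2]
      have : |2 * al k * x * (a₀ k x + a₁ k * x ^ 2)| * ((Wfn k x t)⁻¹ * (t + x ^ 2)⁻¹)
          ≤ |2 * al k * x * (a₀ k x + a₁ k * x ^ 2)| * (4 / r₀ ^ 2) * (Wfn k x t)⁻¹ := by
        have h4 := abs_nonneg (2 * al k * x * (a₀ k x + a₁ k * x ^ 2))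
        nlinarith [htx2, hg, mul_nonneg h4 hg.le]
      nlinarith
    calc |(da₀ k x + 2 * al k * x * a₁ k) * (Wfn k x t)⁻¹
        - 2 * al k * x * (a₀ k x + a₁ k * x ^ 2) * ((Wfn k x t)⁻¹ / (t + x ^ 2))|
        ≤ P x * (Wfn k x t)⁻¹ := habs
      _ ≤ M * ((r₀ / 2) ^ (-(2 * al k)) * t ^ (-al k)) := by
          have hb0 : (0:ℝ) ≤ (r₀ / 2) ^ (-(2 * al k)) * t ^ (-al k) :=
            mul_nonneg (rpow_nonneg hε.le _) (rpow_nonneg ht.1.le _)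
          exact mul_le_mul hPle hgle hg.le (hP0.trans hPle)
  · -- bound integrable
    have : IntervalIntegrable (fun t : ℝ => t ^ (-al k)) volume 0 1 :=
      intervalIntegrable_rpow' (neg_al_gt k hk)
    have := (this.const_mul ((r₀ / 2) ^ (-(2 * al k)))).const_mul M
    exact this
  · -- h_diff
    filter_upwards [hae] with t htI htIoc x hx
    exact Ffn_deriv (hball x hx).2.2 (htI htIoc)

end PP

open PP

/-- at a positive zero `r₀` of `p`, the derivative of `p` is given by `Q₁`. -/
theorem period_deriv_at_zero (k : ℕ) (hk : 2 ≤ k) (r₀ : ℝ) (hr : 0 < r₀)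
    (hp : periodP k r₀ = 0) :
    HasDerivAt (periodP k)
      ((k : ℝ) * ((k : ℝ) + 2) * r₀ ^ (-(3 * (k : ℝ) + 1) / ((k : ℝ) + 1)) * Q₁ k r₀ /
        (((k : ℝ) + 1) * (r₀ ^ 2 + 1)) * A0fn k r₀) r₀ := by
  have hk1 : (0:ℝ) < (k:ℝ) + 1 := by positivity
  have hkR : (2:ℝ) ≤ (k:ℝ) := by exact_mod_cast hk
  set c : ℝ := -(2 * (k : ℝ)) / ((k : ℝ) + 1) with hc_def
  -- notation for the three integrals at r₀
  set A0 : ℝ := ∫ t in (0:ℝ)..1, (Wfn k r₀ t)⁻¹ with hA0_def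
  set A1 : ℝ := ∫ t in (0:ℝ)..1, t * (Wfn k r₀ t)⁻¹ with hA1_def
  set J : ℝ := ∫ t in (0:ℝ)..1, (Wfn k r₀ t)⁻¹ / (t + r₀ ^ 2) with hJ_def
  have hIeq : ∀ x : ℝ, (∫ t in (0:ℝ)..1, (a₀ k x - a₁ k * t) / Wfn k x t)
      = ∫ t in (0:ℝ)..1, Ffn k x t := by
    intro x
    apply intervalIntegral.integral_congr
    intro t _
    simp [Ffn, div_eq_mul_inv]
  -- split I(r₀)
  have hIsplit : (∫ t in (0:ℝ)..1, Ffn k r₀ t) = a₀ k r₀ * A0 - a₁ k * A1 := by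
    have h2 := intWinv hk hr
    have h1 := intTWinv hk hr
    have : (∫ t in (0:ℝ)..1, Ffn k r₀ t)
        = ∫ t in (0:ℝ)..1, (a₀ k r₀ * (Wfn k r₀ t)⁻¹ - a₁ k * (t * (Wfn k r₀ t)⁻¹)) := by
      apply intervalIntegral.integral_congr
      intro t _
      rw [Ffn]; ring
    rw [this, integral_sub (h2.const_mul _) (h1.const_mul _),
      intervalIntegral.integral_const_mul, intervalIntegral.integral_const_mul]
  -- I(r₀) = 0
  have hr0c : (0:ℝ) < r₀ ^ c := rpow_pos_of_pos hr c
  have hI0 : a₀ k r₀ * A0 - a₁ k * A1 = 0 := by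
    rw [periodP, abs_of_pos hr, hIeq, hIsplit] at hp
    rcases mul_eq_zero.mp hp with h | h
    · exact absurd h (ne_of_gt hr0c)
    · exact h
  -- split I'(r₀)
  have hI'split : (∫ t in (0:ℝ)..1, Ffn' k r₀ t)
      = (da₀ k r₀ + 2 * al k * r₀ * a₁ k) * A0
        - 2 * al k * r₀ * (a₀ k r₀ + a₁ k * r₀ ^ 2) * J := by
    have h2 := intWinv hk hr
    have h3 := intJWinv hk hr
    rw [show (fun t => Ffn' k r₀ t) = fun t =>
        ((da₀ k r₀ + 2 * al k * r₀ * a₁ k) * (Wfn k r₀ t)⁻¹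
          - 2 * al k * r₀ * (a₀ k r₀ + a₁ k * r₀ ^ 2) * ((Wfn k r₀ t)⁻¹ / (t + r₀ ^ 2)))
      from rfl]
    rw [integral_sub (h2.const_mul _) (h3.const_mul _),
      intervalIntegral.integral_const_mul, intervalIntegral.integral_const_mul]
  -- the derivative of G x = x^c * I x
  have hrpow : HasDerivAt (fun x : ℝ => x ^ c) (c * r₀ ^ (c - 1)) r₀ :=
    Real.hasDerivAt_rpow_const (Or.inl (ne_of_gt hr))
  have hG : HasDerivAt (fun x => x ^ c * ∫ t in (0:ℝ)..1, Ffn k x t)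
      (c * r₀ ^ (c - 1) * (∫ t in (0:ℝ)..1, Ffn k r₀ t)
        + r₀ ^ c * ∫ t in (0:ℝ)..1, Ffn' k r₀ t) r₀ :=
    hrpow.mul (main_deriv hk hr)
  -- periodP agrees with G near r₀
  have hcongr : periodP k =ᶠ[nhds r₀] (fun x => x ^ c * ∫ t in (0:ℝ)..1, Ffn k x t) := by
    filter_upwards [eventually_gt_nhds hr] with x hx
    rw [periodP, abs_of_pos hx, hIeq]
  have hD : HasDerivAt (periodP k)
      (c * r₀ ^ (c - 1) * (∫ t in (0:ℝ)..1, Ffn k r₀ t)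
        + r₀ ^ c * ∫ t in (0:ℝ)..1, Ffn' k r₀ t) r₀ :=
    hG.congr_of_eventuallyEq hcongr
  -- now rewrite the value
  have hval : c * r₀ ^ (c - 1) * (∫ t in (0:ℝ)..1, Ffn k r₀ t)
        + r₀ ^ c * ∫ t in (0:ℝ)..1, Ffn' k r₀ t
      = (k : ℝ) * ((k : ℝ) + 2) * r₀ ^ (-(3 * (k : ℝ) + 1) / ((k : ℝ) + 1)) * Q₁ k r₀ /
        (((k : ℝ) + 1) * (r₀ ^ 2 + 1)) * A0fn k r₀ := by
    have hA0fn : A0fn k r₀ = A0 := by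
      rw [A0fn, hA0_def]
      apply intervalIntegral.integral_congr
      intro t _
      simp [one_div]
    rw [hIsplit, hI0, mul_zero, zero_add, hI'split, hA0fn]
    -- express the exponent
    have hexp : r₀ ^ (-(3 * (k : ℝ) + 1) / ((k : ℝ) + 1)) = r₀ ^ c * r₀⁻¹ := by
      rw [show -(3 * (k : ℝ) + 1) / ((k : ℝ) + 1) = c + (-1) by
        rw [hc_def]; field_simp; ring]
      rw [rpow_add hr, rpow_neg_one]
    rw [hexp]
    -- algebra: use the two linear relations
    have ha₁ne : a₁ k ≠ 0 := by rw [a₁]; positivity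
    have halne : al k ≠ 0 := by rw [al]; positivity
    have hr2ne : r₀ ^ 2 + 1 ≠ 0 := by positivity
    have hkey := key_identity hk hr
    rw [← hA1_def, ← hA0_def, ← hJ_def] at hkey
    have hA1eq : A1 = a₀ k r₀ * A0 / a₁ k := by
      field_simp
      linarith [hI0]
    have hJeq : J = ((2 - al k) * A1 + (2 * al k - 1 + al k * r₀ ^ 2) * A0)
        / (al k * r₀ ^ 2 * (r₀ ^ 2 + 1)) := by
      rw [eq_div_iff (by positivity : al k * r₀ ^ 2 * (r₀ ^ 2 + 1) ≠ 0)]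
      linarith [hkey]
    rw [hJeq, hA1eq]
    rw [al, a₀, a₁, da₀, Q₁]
    have hrne : r₀ ≠ 0 := ne_of_gt hr
    have hk1ne : ((k:ℝ) + 1) ≠ 0 := ne_of_gt hk1
    have h2k1 : 2 * (2 * (k:ℝ) + 1) ≠ 0 := by positivity
    field_simp
    ring
  rw [← hval]
  exact hD
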